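/- arXiv:2306.17134 — 2 statements merged into one kernel-verified Lean document; each statement's English description precedes it below -/
import Mathlib

section
/- Suppose that n ∈ ℕ and that G₁, …, G_n are normal subgroups of a finite group G of pairwise coprime orders such that G = G₁ × ⋯ × G_n. Then G is L₉-free if and only if, for every i ∈ {1, …, n}, the group G_i is L₉-free. -/
/-! ## The lattices `L₅` and `L₉` -/

/-- The pentagon lattice `L₅`. -/
inductive L5 : Type
  | E | S | U | A | F
  deriving DecidableEq

instance : Fintype L5 :=
  ⟨⟨↑[L5.E, L5.S, L5.U, L5.A, L5.F], by decide⟩, fun x => by cases x <;> decide⟩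

namespace L5

/-- The order relation of `L₅`. -/
def le : L5 → L5 → Bool
  | E, _ => true
  | _, F => true
  | S, S => true
  | S, A => true
  | U, U => true
  | A, A => true
  | _, _ => false

/-- Joins in `L₅`. -/
def sup : L5 → L5 → L5
  | E, x => x
  | x, E => x
  | F, _ | _, F => F
  | S, S => S
  | S, A | A, S => A
  | S, U | U, S => F
  | U, U => U
  | U, A | A, U => F
  | A, A => A

/-- Meets in `L₅`. -/
def inf : L5 → L5 → L5
  | E, _ | _, E => E
  | F, x => x
  | x, F => x
  | S, S => S
  | S, A | A, S => S
  | S, U | U, S => E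
  | U, U => U
  | U, A | A, U => E
  | A, A => A

instance : LE L5 := ⟨fun a b => le a b = true⟩

instance : DecidableRel ((· ≤ ·) : L5 → L5 → Prop) := fun a b =>
  inferInstanceAs (Decidable (le a b = true))

instance : PartialOrder L5 where
  le := (· ≤ ·)
  le_refl := by decide
  le_trans := by decide
  le_antisymm := by decide

instance : Lattice L5 where
  sup := sup
  le_sup_left := by decide
  le_sup_right := by decide
  sup_le := by decide
  inf := inf
  inf_le_left := by decide
  inf_le_right := by decide
  le_inf := by decide

end L5

/-- The nine-element lattice `L₉ = L₁₀ \ {V}`, where `L₁₀` is the subgroup lattice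
of the dihedral group of order `8`.  It has least element `E`, greatest element `F`,
coatoms `A`, `B`, `C`, an element `D` with `E < D < A, B, C`, and atoms `S`, `T`
(below `A`) and `U` (below `C`). -/
inductive L9 : Type
  | E | S | T | D | U | A | B | C | F
  deriving DecidableEq

instance : Fintype L9 :=
  ⟨⟨↑[L9.E, L9.S, L9.T, L9.D, L9.U, L9.A, L9.B, L9.C, L9.F], by decide⟩,
    fun x => by cases x <;> decide⟩

namespace L9

/-- The order relation of `L₉`. -/
def le : L9 → L9 → Bool
  | E, _ => true
  | _, F => true
  | S, S => true
  | S, A => true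
  | T, T => true
  | T, A => true
  | D, D => true
  | D, A => true
  | D, B => true
  | D, C => true
  | U, U => true
  | U, C => true
  | A, A => true
  | B, B => true
  | C, C => true
  | _, _ => false

/-- Joins in `L₉`. -/
def sup : L9 → L9 → L9
  | E, x => x
  | x, E => x
  | F, _ | _, F => F
  | S, S => S
  | S, T | T, S => A
  | S, D | D, S => A
  | S, U | U, S => F
  | S, A | A, S => A
  | S, B | B, S => F
  | S, C | C, S => F
  | T, T => T
  | T, D | D, T => A
  | T, U | U, T => F
  | T, A | A, T => A
  | T, B | B, T => F
  | T, C | C, T => F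
  | D, D => D
  | D, U | U, D => C
  | D, A | A, D => A
  | D, B | B, D => B
  | D, C | C, D => C
  | U, U => U
  | U, A | A, U => F
  | U, B | B, U => F
  | U, C | C, U => C
  | A, A => A
  | A, B | B, A => F
  | A, C | C, A => F
  | B, B => B
  | B, C | C, B => F
  | C, C => C

/-- Meets in `L₉`. -/
def inf : L9 → L9 → L9
  | E, _ | _, E => E
  | F, x => x
  | x, F => x
  | S, S => S
  | S, T | T, S => E
  | S, D | D, S => E
  | S, U | U, S => E
  | S, A | A, S => S
  | S, B | B, S => E
  | S, C | C, S => E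
  | T, T => T
  | T, D | D, T => E
  | T, U | U, T => E
  | T, A | A, T => T
  | T, B | B, T => E
  | T, C | C, T => E
  | D, D => D
  | D, U | U, D => E
  | D, A | A, D => D
  | D, B | B, D => D
  | D, C | C, D => D
  | U, U => U
  | U, A | A, U => E
  | U, B | B, U => E
  | U, C | C, U => U
  | A, A => A
  | A, B | B, A => D
  | A, C | C, A => D
  | B, B => B
  | B, C | C, B => D
  | C, C => C

instance : LE L9 := ⟨fun a b => le a b = true⟩

instance : DecidableRel ((· ≤ ·) : L9 → L9 → Prop) := fun a b =>
  inferInstanceAs (Decidable (le a b = true))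

instance : PartialOrder L9 where
  le := (· ≤ ·)
  le_refl := by decide
  le_trans := by decide
  le_antisymm := by decide

instance : Lattice L9 where
  sup := sup
  le_sup_left := by decide
  le_sup_right := by decide
  sup_le := by decide
  inf := inf
  inf_le_left := by decide
  inf_le_right := by decide
  le_inf := by decide

end L9

/-- A group `G` is `L`-free (for a lattice `L`) if its subgroup lattice has no
sublattice isomorphic to `L`, i.e. there is no injective map from `L` to the
subgroups of `G` carrying joins to joins and meets to intersections. -/
def IsLatticeFree (L : Type*) [Lattice L] (G : Type*) [Group G] : Prop :=
  ¬ ∃ f : L → Subgroup G, Function.Injective f ∧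
      (∀ a b : L, f (a ⊔ b) = f a ⊔ f b) ∧ (∀ a b : L, f (a ⊓ b) = f a ⊓ f b)

/-- A group is `L₉`-free if its subgroup lattice has no sublattice isomorphic to `L₉`. -/
abbrev IsL9Free (G : Type*) [Group G] : Prop := IsLatticeFree L9 G

section GroupDefs

variable {G : Type*} [Group G]

/-- The subgroup `X` centralises the subgroup `Y` elementwise. -/
def Centralises (X Y : Subgroup G) : Prop := ∀ x ∈ X, ∀ y ∈ Y, x * y = y * x

/-- The subgroup `X` normalises the subgroup `Y`, i.e. `Y` is `X`-invariant. -/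
def Normalises (X Y : Subgroup G) : Prop := ∀ x ∈ X, ∀ y ∈ Y, x * y * x⁻¹ ∈ Y

/-- The centraliser `C_X(Y)` of `Y` in `X`. -/
def centIn (X Y : Subgroup G) : Subgroup G := X ⊓ Subgroup.centralizer (Y : Set G)

/-- `Q` acts irreducibly on `P` (by conjugation): `P ≠ 1` and the only
`Q`-invariant subgroups of `P` are `1` and `P`. -/
def ActsIrreduciblyOn (Q P : Subgroup G) : Prop :=
  P ≠ ⊥ ∧ ∀ R : Subgroup G, R ≤ P → Normalises Q R → R = ⊥ ∨ R = P

/-- `Q` induces (possibly trivial) power automorphisms on `P`: every subgroup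
of `P` is `Q`-invariant. -/
def InducesPowerAutosOn (Q P : Subgroup G) : Prop :=
  ∀ R : Subgroup G, R ≤ P → Normalises Q R

/-- The subgroup `P` is abelian. -/
def IsCommSubgroup (P : Subgroup G) : Prop := ∀ x ∈ P, ∀ y ∈ P, x * y = y * x

/-- The subgroup `P` is elementary abelian. -/
def IsElemAbelian (P : Subgroup G) : Prop :=
  IsCommSubgroup P ∧ ∃ p : ℕ, p.Prime ∧ ∀ x ∈ P, x ^ p = 1

/-- `Q` is a Sylow `p`-subgroup of `B` (both subgroups of the ambient group `G`):
a `p`-subgroup of `B` whose index in `B` is prime to `p`. -/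
def IsSylowIn (p : ℕ) (Q B : Subgroup G) : Prop :=
  Q ≤ B ∧ IsPGroup p ↥Q ∧ ¬ p ∣ Q.relIndex B

/-- `Q` is a `π`-group: all primes dividing its order lie in `π`. -/
def IsPiSubgroup (π : Set ℕ) (Q : Subgroup G) : Prop :=
  ∀ p : ℕ, p.Prime → p ∣ Nat.card ↥Q → p ∈ π

/-- `O_p(L)`: the largest normal `p`-subgroup of `L`, as a subgroup of the ambient group. -/
def pCoreIn (p : ℕ) (L : Subgroup G) : Subgroup G :=
  ⨆ Q ∈ {Q : Subgroup G | Q ≤ L ∧ IsPGroup p ↥Q ∧ Normalises L Q}, Q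

/-- `O_π(L)`: the largest normal `π`-subgroup of `L`, as a subgroup of the ambient group. -/
def piCoreIn (π : Set ℕ) (L : Subgroup G) : Subgroup G :=
  ⨆ Q ∈ {Q : Subgroup G | Q ≤ L ∧ IsPiSubgroup π Q ∧ Normalises L Q}, Q

end GroupDefs

/-- A batten: a cyclic group of prime power order, a group isomorphic to `Q₈`, or
a product `QR` with `Q` normal of prime order `q`, `R` a cyclic `p`-group with
`p ≠ q` and `C_R(Q) = Φ(R) ≠ 1`. -/
def IsBattenGrp (B : Type*) [Group B] : Prop :=
  (IsCyclic B ∧ ∃ p : ℕ, p.Prime ∧ IsPGroup p B) ∨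
  Nonempty (B ≃* QuaternionGroup 2) ∨
  (∃ (Q R : Subgroup B) (q p : ℕ), q.Prime ∧ p.Prime ∧ p ≠ q ∧
    Q.Normal ∧ Nat.card ↥Q = q ∧ IsCyclic ↥R ∧ IsPGroup p ↥R ∧
    Q ⊔ R = ⊤ ∧
    R ⊓ Subgroup.centralizer (Q : Set B) = (frattini ↥R).map R.subtype ∧
    frattini ↥R ≠ ⊥)

section Batten

variable {G : Type*} [Group G]

/-- `S` is an internal decomposition of `K ≤ G` as a direct product of battens
of pairwise coprime orders (the members of `S` are the battens of `K`). -/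
def IsBattenDecomp (K : Subgroup G) (S : Finset (Subgroup G)) : Prop :=
  (∀ B ∈ S, B ≤ K ∧ Normalises K B ∧ IsBattenGrp ↥B) ∧
  (∀ B ∈ S, ∀ B' ∈ S, B ≠ B' → Nat.Coprime (Nat.card ↥B) (Nat.card ↥B')) ∧
  S.sup id = K ∧ (∏ B ∈ S, Nat.card ↥B) = Nat.card ↥K

/-- `K ≤ G` is a batten group. -/
def IsBattenGroupSub (K : Subgroup G) : Prop :=
  ∃ S : Finset (Subgroup G), IsBattenDecomp K S

/-- A cyclic `q`-group `Q` acts on the `p`-group `P` avoiding `L₉` (types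
(std), (cent), (hamil)). -/
def AvoidsL9CyclicQ (Q P : Subgroup G) : Prop :=
  IsCyclic ↥Q ∧ (∃ q : ℕ, q.Prime ∧ IsPGroup q ↥Q) ∧
  (∃ p : ℕ, p.Prime ∧ IsPGroup p ↥P) ∧
  Nat.Coprime (Nat.card ↥Q) (Nat.card ↥P) ∧ Normalises Q P ∧
  ( -- (std)
    (P = ⁅P, Q⁆ ∧ IsElemAbelian P ∧
      ∀ U : Subgroup G, U ≤ Q → ActsIrreduciblyOn U P ∨ InducesPowerAutosOn U P) ∨
    -- (cent)
    (IsElemAbelian ⁅P, Q⁆ ∧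
      (∀ U : Subgroup G, U ≤ Q → ActsIrreduciblyOn U ⁅P, Q⁆ ∨ Centralises U ⁅P, Q⁆) ∧
      IsCommSubgroup P ∧ centIn P Q ≠ ⊥ ∧ IsCyclic ↥(centIn P Q) ∧
      IsPGroup 2 ↥(centIn P Q)) ∨
    -- (hamil)
    (Nonempty (↥⁅P, Q⁆ ≃* QuaternionGroup 2) ∧
      (∃ I : Subgroup G, I ≤ P ∧ Nat.card ↥I ≤ 2 ∧ ⁅P, Q⁆ ⊓ I = ⊥ ∧ ⁅P, Q⁆ ⊔ I = P ∧
        Centralises ⁅P, Q⁆ I) ∧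
      IsPGroup 3 ↥Q ∧
      Nonempty ((↥(⁅P, Q⁆ ⊔ Q) ⧸ Subgroup.center ↥(⁅P, Q⁆ ⊔ Q)) ≃*
        ↥(alternatingGroup (Fin 4)))) )

/-- A group `Q ≅ Q₈` acts on the `p`-group `P` avoiding `L₉`. -/
def AvoidsL9Q8 (Q P : Subgroup G) : Prop :=
  Nonempty (↥Q ≃* QuaternionGroup 2) ∧ Normalises Q P ∧
  ∃ p : ℕ, p.Prime ∧ IsPGroup p ↥P ∧ p % 4 = 3 ∧ Nat.card ↥P = p ^ 2 ∧
    (∀ x ∈ Q, (∀ y ∈ P, x * y * x⁻¹ = y) → x = 1)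

/-- A non-nilpotent batten `B` acts on the `p`-group `P` avoiding `L₉`
(types (Cy) and (NN)); here `𝓑(B)` is the unique normal Sylow subgroup of `B`
(of prime order `q`) and `Z(B)` is the centre of `B`. -/
def AvoidsL9NN (B P : Subgroup G) : Prop :=
  IsBattenGrp ↥B ∧ ¬ Group.IsNilpotent ↥B ∧ Normalises B P ∧
  Nat.Coprime (Nat.card ↥B) (Nat.card ↥P) ∧
  ∃ p : ℕ, p.Prime ∧ IsPGroup p ↥P ∧
    ⁅P, centIn B B⁆ ≠ ⊥ ∧
    ∃ q : ℕ, q.Prime ∧ ∃ QB : Subgroup G, Normalises B QB ∧ IsSylowIn q QB B ∧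
      Nat.card ↥QB = q ∧
      ( -- (Cy)
        (⁅P, QB⁆ = ⊥ ∧ ∀ r : ℕ, r.Prime → r ≠ q → r ∣ Nat.card ↥B →
          ∀ R : Subgroup G, IsSylowIn r R B → AvoidsL9CyclicQ R P) ∨
        -- (NN)
        (IsElemAbelian P ∧ Nat.card ↥P = p ^ ((QB ⊔ centIn B B).relIndex B) ∧
          (∀ r : ℕ, r.Prime → r ∣ Nat.card ↥B →
            ∀ R : Subgroup G, IsSylowIn r R B → ActsIrreduciblyOn R P) ∧
          InducesPowerAutosOn (centIn B B) P) )

/-- A batten `B` acts on the `p`-group `P` avoiding `L₉`. -/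
def AvoidsL9Batten (B P : Subgroup G) : Prop :=
  AvoidsL9CyclicQ B P ∨ AvoidsL9Q8 B P ∨ AvoidsL9NN B P

/-- A cyclic group `L` acts on the `p`-group `P` avoiding `L₉`: `[P,L] ≠ 1` and
every primary component of `L` centralises `P` or acts on `P` avoiding `L₉`. -/
def AvoidsL9CyclicGroup (L P : Subgroup G) : Prop :=
  IsCyclic ↥L ∧ ⁅P, L⁆ ≠ ⊥ ∧
  ∀ q : ℕ, q.Prime → q ∣ Nat.card ↥L →
    Centralises (pCoreIn q L) P ∨ AvoidsL9CyclicQ (pCoreIn q L) P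

/-- The set `π := {q ∈ π(L) | C_{O_q(L)}(H) < C_{O_q(L)}(J)}`. -/
def piHJ (L H J : Subgroup G) : Set ℕ :=
  {q : ℕ | q.Prime ∧ q ∣ Nat.card ↥L ∧
    centIn (pCoreIn q L) H < centIn (pCoreIn q L) J}

/-- `G` belongs to the class `𝔏` with type `(N, K)`, where `S` is the set of
battens of `K`. -/
def FrakLType (N K : Subgroup G) (S : Finset (Subgroup G)) : Prop :=
  -- (𝔏1)
  N.Normal ∧ Group.IsNilpotent ↥N ∧ Nat.Coprime (Nat.card ↥N) N.index ∧
  (∀ p : ℕ, p.Prime → ∀ P : Subgroup G, IsSylowIn p P N →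
    IsModularLattice (Subgroup ↥P)) ∧
  N ⊓ K = ⊥ ∧ N ⊔ K = ⊤ ∧ IsBattenDecomp K S ∧
  -- (𝔏2)
  (∀ p : ℕ, p.Prime → p ∣ Nat.card ↥N → ∀ B ∈ S,
    Centralises B (pCoreIn p N) ∨ AvoidsL9Batten B (pCoreIn p N)) ∧
  -- (𝔏3)
  (∀ q : ℕ, q.Prime → ∀ Q : Subgroup G, IsSylowIn q Q K →
    ∀ p r : ℕ, p.Prime → r.Prime → p ≠ r →
      ¬ Centralises Q (pCoreIn p N) → ¬ Centralises Q (pCoreIn r N) →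
      centIn Q (pCoreIn p N) ≠ centIn Q (pCoreIn r N)) ∧
  -- (𝔏4)
  (∀ H L J : Subgroup G, H ≤ N → IsCommSubgroup H →
    (∀ p : ℕ, p.Prime → ∀ P : Subgroup G, IsSylowIn p P H → P ≠ ⊥ → ¬ IsCyclic ↥P) →
    L ≤ K → IsCyclic ↥L → InducesPowerAutosOn L H →
    (∀ q : ℕ, q.Prime → (q ∣ Nat.card ↥L ↔ q ∣ (centIn L H).relIndex L)) →
    J ≠ ⊥ → J ≤ N → Normalises L J → IsCommSubgroup J →
    Nat.Coprime (Nat.card ↥H) (Nat.card ↥J) → Centralises H J →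
    centIn H (centIn L J) = ⊥ →
    ∃ g ∈ H ⊔ J, g ≠ 1 ∧
      ((∀ x ∈ piCoreIn (piHJ L H J) L, g * x = x * g) ∨
       (∀ x ∈ piCoreIn {q : ℕ | q.Prime ∧ q ∉ piHJ L H J} L, g * x = x * g)))

end Batten

/-- The class `𝔏`. -/
def InFrakL (G : Type*) [Group G] : Prop :=
  ∃ (N K : Subgroup G) (S : Finset (Subgroup G)), FrakLType N K S

/-! If `G` is the direct product of normal subgroups `Gᵢ` of pairwise coprime orders, the
`Gᵢ`-component of any `x ∈ G` is a power of `x`. Hence every subgroup `K` is the join of the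
`K ∩ Gᵢ`, and each `K ↦ K ∩ Gᵢ` is a lattice homomorphism; together these homomorphisms separate
subgroups. A copy of `L₉` in the subgroup lattice of `G` thus maps homomorphically into every
subgroup lattice of a `Gᵢ`, and since `L₉` is a simple lattice, one of these maps is injective. -/

lemma LatticeHom.map_sup_inf_congr {α β : Type*} [Lattice α] [Lattice β] (g : LatticeHom α β)
    {x y : α} (h : g x = g y) (c d : α) : g ((x ⊔ c) ⊓ d) = g ((y ⊔ c) ⊓ d) := by
  simp only [map_inf, map_sup, h]

namespace L9

/- Lattice homomorphisms respect the translations `x ↦ (x ⊔ c) ⊓ d`; the two enumerations below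
show that translations and transitivity lead from any pair of distinct elements of `L₉` to the
pair `(E, S)`, and from there to `(E, F)`. -/

lemma exists_translate_eq_E_of_ne :
    ∀ x y : L9, x ≠ y → ∃ c d : L9,
      ((x ⊔ c) ⊓ d = E ∧ (y ⊔ c) ⊓ d ≠ E) ∨ ((y ⊔ c) ⊓ d = E ∧ (x ⊔ c) ⊓ d ≠ E) := by
  decide

lemma exists_translate_eq_S_of_ne_E :
    ∀ z : L9, z ≠ E → ∃ c d : L9, (E ⊔ c) ⊓ d = E ∧ (z ⊔ c) ⊓ d = S := by
  decide

variable {M : Type*} [Lattice M] (g : LatticeHom L9 M)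

lemma map_E_eq_map_S_of_map_eq {z : L9} (hz : z ≠ E) (h : g E = g z) : g E = g S := by
  obtain ⟨c, d, hE, hS⟩ := exists_translate_eq_S_of_ne_E z hz
  simpa only [hE, hS] using g.map_sup_inf_congr h c d

lemma map_E_eq_map_F_of_map_E_eq_map_S (h : g E = g S) : g E = g F :=
  have hEB : g E = g B := g.map_sup_inf_congr h U B
  h.trans (g.map_sup_inf_congr hEB S F)

lemma map_E_eq_map_F_of_not_injective (hg : ¬ Function.Injective g) : g E = g F := by
  obtain ⟨x, y, hxy, hne⟩ := Function.not_injective_iff.mp hg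
  refine map_E_eq_map_F_of_map_E_eq_map_S g ?_
  obtain ⟨c, d, ⟨hx, hy⟩ | ⟨hy, hx⟩⟩ := exists_translate_eq_E_of_ne x y hne
  · exact map_E_eq_map_S_of_map_eq g hy (hx ▸ g.map_sup_inf_congr hxy c d)
  · exact map_E_eq_map_S_of_map_eq g hx (hy ▸ g.map_sup_inf_congr hxy.symm c d)

end L9

section LatticeFree

variable {L : Type*} [Lattice L] {G : Type*} [Group G]

lemma isLatticeFree_iff :
    IsLatticeFree L G ↔ ∀ g : LatticeHom L (Subgroup G), ¬ Function.Injective g := by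
  refine ⟨fun h g hg => h ⟨g, hg, map_sup g, map_inf g⟩, ?_⟩
  rintro h ⟨f, hf, hsup, hinf⟩
  exact h ⟨⟨f, hsup⟩, hinf⟩ hf

lemma IsLatticeFree.subgroup (h : IsLatticeFree L G) (K : Subgroup G) : IsLatticeFree L K := by
  rw [isLatticeFree_iff] at h ⊢
  intro g hg
  let mapSubtype : LatticeHom (Subgroup K) (Subgroup G) :=
    ⟨⟨Subgroup.map K.subtype, fun X Y => Subgroup.map_sup X Y _⟩,
      fun X Y => Subgroup.map_inf X Y _ K.subtype_injective⟩
  exact h (mapSubtype.comp g) ((Subgroup.map_injective K.subtype_injective).comp hg)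

end LatticeFree

section CoprimeDirectProduct

variable {G : Type*} [Group G] {ι : Type*}

structure IsCoprimeDirectProduct (H : ι → Subgroup G) : Prop where
  commute : Pairwise fun i j => ∀ x y : G, x ∈ H i → y ∈ H j → Commute x y
  coprime : Pairwise fun i j => (Nat.card (H i)).Coprime (Nat.card (H j))
  iSup_eq_top : ⨆ i, H i = ⊤

namespace IsCoprimeDirectProduct

variable [Finite G] [Fintype ι] {H : ι → Subgroup G}

lemma iSupIndep (hH : IsCoprimeDirectProduct H) : iSupIndep H := by
  have : ∀ i, Fintype (H i) := fun i => Fintype.ofFinite _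
  refine Subgroup.independent_of_coprime_order hH.commute fun i j hij => ?_
  simpa only [← Nat.card_eq_fintype_card] using hH.coprime hij

noncomputable def mulEquiv (hH : IsCoprimeDirectProduct H) : (∀ i, H i) ≃* G :=
  MulEquiv.ofBijective (Subgroup.noncommPiCoprod hH.commute)
    ⟨Subgroup.injective_noncommPiCoprod_of_iSupIndep hH.iSupIndep, by
      rw [← MonoidHom.range_eq_top, Subgroup.noncommPiCoprod_range, hH.iSup_eq_top]⟩

noncomputable def proj (hH : IsCoprimeDirectProduct H) (i : ι) : G →* G :=
  (H i).subtype.comp ((Pi.evalMonoidHom (fun i => H i) i).comp hH.mulEquiv.symm.toMonoidHom)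

lemma proj_apply (hH : IsCoprimeDirectProduct H) (i : ι) (x : G) :
    hH.proj i x = hH.mulEquiv.symm x i :=
  rfl

lemma proj_mem (hH : IsCoprimeDirectProduct H) (i : ι) (x : G) : hH.proj i x ∈ H i :=
  (hH.mulEquiv.symm x i).2

lemma mulEquiv_mulSingle [DecidableEq ι] (hH : IsCoprimeDirectProduct H) (i : ι) (y : H i) :
    hH.mulEquiv (Pi.mulSingle i y) = y :=
  Subgroup.noncommPiCoprod_mulSingle (hcomm := hH.commute) i y

lemma proj_eq_self (hH : IsCoprimeDirectProduct H) {i : ι} {x : G} (hx : x ∈ H i) :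
    hH.proj i x = x := by
  classical
  have h : hH.mulEquiv.symm x = Pi.mulSingle i ⟨x, hx⟩ :=
    hH.mulEquiv.symm_apply_eq.mpr (hH.mulEquiv_mulSingle i ⟨x, hx⟩).symm
  rw [proj_apply, h, Pi.mulSingle_eq_same]

/-- With `m = ∏_{j ≠ i} |H j|`, the power `x ^ m` kills every component but the `i`-th,
and `m` is prime to the order of that component. -/
lemma proj_mem_zpowers (hH : IsCoprimeDirectProduct H) (i : ι) (x : G) :
    hH.proj i x ∈ Subgroup.zpowers x := by
  classical
  set k := hH.mulEquiv.symm x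
  set m := ∏ j ∈ Finset.univ.erase i, Nat.card (H j)
  have hk : k ^ m = Pi.mulSingle i (k i ^ m) := by
    funext j
    rcases eq_or_ne j i with rfl | hji
    · simp
    · rw [Pi.pow_apply, Pi.mulSingle_eq_of_ne hji, ← orderOf_dvd_iff_pow_eq_one]
      exact (orderOf_dvd_natCard _).trans
        (Finset.dvd_prod_of_mem _ (Finset.mem_erase.mpr ⟨hji, Finset.mem_univ j⟩))
  have hpow : x ^ m = hH.proj i x ^ m := calc
    x ^ m = hH.mulEquiv (k ^ m) := by rw [map_pow, hH.mulEquiv.apply_symm_apply]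
    _ = hH.proj i x ^ m := by rw [hk, hH.mulEquiv_mulSingle, Subgroup.coe_pow, proj_apply]
  have hcop : m.Coprime (orderOf (hH.proj i x)) := by
    rw [proj_apply, Subgroup.orderOf_coe (k i)]
    exact Nat.Coprime.coprime_dvd_right (orderOf_dvd_natCard _)
      (Nat.Coprime.prod_left fun j hj => hH.coprime (Finset.mem_erase.mp hj).1)
  obtain ⟨r, hr⟩ := exists_pow_eq_self_of_coprime hcop
  rw [← hr, ← hpow, ← pow_mul]
  exact Subgroup.npow_mem_zpowers x _

lemma map_proj (hH : IsCoprimeDirectProduct H) (K : Subgroup G) (i : ι) :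
    K.map (hH.proj i) = K ⊓ H i := by
  refine le_antisymm ?_ fun x hx => ⟨x, hx.1, hH.proj_eq_self hx.2⟩
  rintro _ ⟨x, hx, rfl⟩
  exact ⟨Subgroup.zpowers_le.mpr hx (hH.proj_mem_zpowers i x), hH.proj_mem i x⟩

lemma iSup_inf_eq (hH : IsCoprimeDirectProduct H) (K : Subgroup G) : ⨆ i, K ⊓ H i = K := by
  refine le_antisymm (iSup_le fun i => inf_le_left) fun x hx => ?_
  rw [← hH.mulEquiv.apply_symm_apply x]
  change Subgroup.noncommPiCoprod hH.commute _ ∈ _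
  rw [Subgroup.noncommPiCoprod_apply]
  refine Subgroup.noncommProd_mem _ _ fun i _ => Subgroup.mem_iSup_of_mem i ?_
  rw [← hH.map_proj]
  exact Subgroup.mem_map_of_mem _ hx

lemma sup_inf_eq (hH : IsCoprimeDirectProduct H) (X Y : Subgroup G) (i : ι) :
    (X ⊔ Y) ⊓ H i = X ⊓ H i ⊔ Y ⊓ H i := by
  simp only [← hH.map_proj, Subgroup.map_sup]

noncomputable def subgroupOfHom (hH : IsCoprimeDirectProduct H) (i : ι) :
    LatticeHom (Subgroup G) (Subgroup (H i)) where
  toFun K := K.subgroupOf (H i)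
  map_sup' X Y := by
    rw [← Subgroup.inf_subgroupOf_right, hH.sup_inf_eq,
      Subgroup.subgroupOf_sup inf_le_right inf_le_right, Subgroup.inf_subgroupOf_right,
      Subgroup.inf_subgroupOf_right]
  map_inf' X Y := Subgroup.comap_inf X Y _

lemma eq_of_forall_subgroupOf_eq (hH : IsCoprimeDirectProduct H) {X Y : Subgroup G}
    (h : ∀ i, X.subgroupOf (H i) = Y.subgroupOf (H i)) : X = Y := by
  rw [← hH.iSup_inf_eq X, ← hH.iSup_inf_eq Y]
  exact iSup_congr fun i => Subgroup.subgroupOf_inj.mp (h i)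

lemma isL9Free (hH : IsCoprimeDirectProduct H) (h : ∀ i, IsL9Free (H i)) : IsL9Free G := by
  refine isLatticeFree_iff.mpr fun g hg => ?_
  have hEF (i : ι) : (hH.subgroupOfHom i).comp g L9.E = (hH.subgroupOfHom i).comp g L9.F :=
    L9.map_E_eq_map_F_of_not_injective _ (isLatticeFree_iff.mp (h i) _)
  exact absurd (hg (hH.eq_of_forall_subgroupOf_eq hEF)) (by decide)

end IsCoprimeDirectProduct

end CoprimeDirectProduct

theorem isL9Free_iff_factors_general (G : Type*) [Group G] [Finite G] (n : ℕ)
    (Gs : Fin n → Subgroup G)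
    (hnorm : ∀ i, (Gs i).Normal)
    (hcop : ∀ i j, i ≠ j → Nat.Coprime (Nat.card ↥(Gs i)) (Nat.card ↥(Gs j)))
    (hsup : (⨆ i, Gs i) = ⊤) :
    IsL9Free G ↔ ∀ i, IsL9Free ↥(Gs i) := by
  have hGs : IsCoprimeDirectProduct Gs :=
    { commute := fun i j hij => Subgroup.commute_of_normal_of_disjoint _ _ (hnorm i) (hnorm j)
        (Subgroup.disjoint_of_coprime_natCard (hcop i j hij))
      coprime := fun i j hij => hcop i j hij
      iSup_eq_top := hsup }
  exact ⟨fun hG i => hG.subgroup (Gs i), hGs.isL9Free⟩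

/-- **Lemma.** If `G = G₁ × ⋯ × Gₙ` is an internal direct product of normal subgroups of
pairwise coprime orders, then `G` is `L₉`-free iff every `Gᵢ` is `L₉`-free. -/
theorem isL9Free_iff_factors (G : Type*) [Group G] [Finite G] (n : ℕ)
    (Gs : Fin n → Subgroup G)
    (hnorm : ∀ i, (Gs i).Normal)
    (hcop : ∀ i j, i ≠ j → Nat.Coprime (Nat.card ↥(Gs i)) (Nat.card ↥(Gs j)))
    (hsup : (⨆ i, Gs i) = ⊤)
    (hcard : (∏ i, Nat.card ↥(Gs i)) = Nat.card G) :
    IsL9Free G ↔ ∀ i, IsL9Free ↥(Gs i) :=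
  isL9Free_iff_factors_general G n Gs hnorm hcop hsup
end

section
/- Let M be a lattice containing elements A, B, C, D, E, F, S, T, U satisfying: (i) D ≠ E; (ii) S ∨ T = S ∨ D = T ∨ D = A and S ∧ T = S ∧ D = T ∧ D = E; (iii) D ∨ U = C and D ∧ U = E; (iv) S ∨ U = T ∨ U = F; (v) A ∨ B = B ∨ C = F and A ∧ B = A ∧ C = B ∧ C = D. Then these nine elements are pairwise distinct and {A, B, C, D, E, F, S, T, U} is a sublattice of M isomorphic to the lattice L₉; conversely, L₉ satisfies relations (i)–(v) under its canonical labelling. -/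
/-- Auxiliary: the canonical labelling map from `L₉` into a lattice. -/
def embed9 {M : Type*} (A B C D E F S T U : M) : L9 → M
  | .E => E | .S => S | .T => T | .D => D | .U => U
  | .A => A | .B => B | .C => C | .F => F

/-- **Lemma.** A lattice `M` with nine elements `A, …, U` satisfying the relations
L9(i)–L9(v) contains them as a sublattice isomorphic to `L₉` (in particular they are
pairwise distinct); conversely `L₉` satisfies these relations under its canonical
labelling. -/
theorem L9_characterisation {M : Type*} [Lattice M] (A B C D E F S T U : M)
    (h1 : D ≠ E)
    (h2 : S ⊔ T = A ∧ S ⊔ D = A ∧ T ⊔ D = A ∧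
      S ⊓ T = E ∧ S ⊓ D = E ∧ T ⊓ D = E)
    (h3 : D ⊔ U = C ∧ D ⊓ U = E)
    (h4 : S ⊔ U = F ∧ T ⊔ U = F)
    (h5 : A ⊔ B = F ∧ B ⊔ C = F ∧ A ⊓ B = D ∧ A ⊓ C = D ∧ B ⊓ C = D) :
    (∃ f : L9 → M, Function.Injective f ∧
      (∀ a b : L9, f (a ⊔ b) = f a ⊔ f b) ∧
      (∀ a b : L9, f (a ⊓ b) = f a ⊓ f b) ∧
      f L9.A = A ∧ f L9.B = B ∧ f L9.C = C ∧ f L9.D = D ∧ f L9.E = E ∧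
      f L9.F = F ∧ f L9.S = S ∧ f L9.T = T ∧ f L9.U = U) ∧
    (L9.D ≠ L9.E ∧
      L9.S ⊔ L9.T = L9.A ∧ L9.S ⊔ L9.D = L9.A ∧ L9.T ⊔ L9.D = L9.A ∧
      L9.S ⊓ L9.T = L9.E ∧ L9.S ⊓ L9.D = L9.E ∧ L9.T ⊓ L9.D = L9.E ∧
      L9.D ⊔ L9.U = L9.C ∧ L9.D ⊓ L9.U = L9.E ∧
      L9.S ⊔ L9.U = L9.F ∧ L9.T ⊔ L9.U = L9.F ∧
      L9.A ⊔ L9.B = L9.F ∧ L9.B ⊔ L9.C = L9.F ∧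
      L9.A ⊓ L9.B = L9.D ∧ L9.A ⊓ L9.C = L9.D ∧ L9.B ⊓ L9.C = L9.D) := by
  
  obtain ⟨hST, hSD, hTD, mST, mSD, mTD⟩ := h2
  obtain ⟨hDU, mDU⟩ := h3
  obtain ⟨hSU, hTU⟩ := h4
  obtain ⟨hAB, hBC, mAB, mAC, mBC⟩ := h5
  -- order facts
  have leSA : S ≤ A := le_sup_left.trans_eq hST
  have leTA : T ≤ A := le_sup_right.trans_eq hST
  have leDA : D ≤ A := le_sup_right.trans_eq hSD
  have leDB : D ≤ B := mAB.symm.trans_le inf_le_right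
  have leDC : D ≤ C := mAC.symm.trans_le inf_le_right
  have leUC : U ≤ C := le_sup_right.trans_eq hDU
  have leES : E ≤ S := mST.symm.trans_le inf_le_left
  have leET : E ≤ T := mST.symm.trans_le inf_le_right
  have leED : E ≤ D := mSD.symm.trans_le inf_le_right
  have leEU : E ≤ U := mDU.symm.trans_le inf_le_right
  have leAF : A ≤ F := le_sup_left.trans_eq hAB
  have leBF : B ≤ F := le_sup_right.trans_eq hAB
  have leCF : C ≤ F := le_sup_right.trans_eq hBC
  have leEA : E ≤ A := leES.trans leSA
  have leEB : E ≤ B := leED.trans leDB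
  have leEC : E ≤ C := leED.trans leDC
  have leEF : E ≤ F := leEA.trans leAF
  have leSF : S ≤ F := leSA.trans leAF
  have leTF : T ≤ F := leTA.trans leAF
  have leDF : D ≤ F := leDA.trans leAF
  have leUF : U ≤ F := leUC.trans leCF
  have leEE : E ≤ E := le_rfl
  -- extra joins
  have sDBeq : D ⊔ B = B := sup_eq_right.mpr leDB
  have sSAeq : S ⊔ A = A := sup_eq_right.mpr leSA
  have sAC : A ⊔ C = F := le_antisymm (sup_le leAF leCF)
    (by rw [← hSU]; exact sup_le_sup leSA leUC)
  have sSB : S ⊔ B = F := by rw [← hAB, ← hSD, sup_assoc, sDBeq]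
  have sTB : T ⊔ B = F := by rw [← hAB, ← hTD, sup_assoc, sDBeq]
  have sUB : U ⊔ B = F := by
    rw [← hBC, ← hDU, sup_comm B (D ⊔ U), sup_comm D U, sup_assoc, sDBeq]
  have sUA : U ⊔ A = F := by
    rw [← sSAeq, ← sup_assoc, sup_comm U S, hSU, sup_eq_left.mpr leAF]
  have sSC : S ⊔ C = F := by rw [← hDU, ← sup_assoc, hSD, sup_comm A U, sUA]
  have sTC : T ⊔ C = F := by rw [← hDU, ← sup_assoc, hTD, sup_comm A U, sUA]
  -- extra meets
  have mSC : S ⊓ C = E := le_antisymm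
    ((le_inf inf_le_left ((inf_le_inf_right C leSA).trans_eq mAC)).trans_eq mSD)
    (le_inf leES leEC)
  have mSB : S ⊓ B = E := le_antisymm
    ((le_inf inf_le_left ((inf_le_inf_right B leSA).trans_eq mAB)).trans_eq mSD)
    (le_inf leES leEB)
  have mTC : T ⊓ C = E := le_antisymm
    ((le_inf inf_le_left ((inf_le_inf_right C leTA).trans_eq mAC)).trans_eq mTD)
    (le_inf leET leEC)
  have mTB : T ⊓ B = E := le_antisymm
    ((le_inf inf_le_left ((inf_le_inf_right B leTA).trans_eq mAB)).trans_eq mTD)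
    (le_inf leET leEB)
  have mSU : S ⊓ U = E := le_antisymm
    ((inf_le_inf_left S leUC).trans_eq mSC) (le_inf leES leEU)
  have mTU : T ⊓ U = E := le_antisymm
    ((inf_le_inf_left T leUC).trans_eq mTC) (le_inf leET leEU)
  have hCA : C ⊓ A = D := (inf_comm C A).trans mAC
  have hCB : C ⊓ B = D := (inf_comm C B).trans mBC
  have hUD : U ⊓ D = E := (inf_comm U D).trans mDU
  have mUA : U ⊓ A = E := le_antisymm
    ((le_inf inf_le_left ((inf_le_inf_right A leUC).trans_eq hCA)).trans_eq hUD)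
    (le_inf leEU leEA)
  have mUB : U ⊓ B = E := le_antisymm
    ((le_inf inf_le_left ((inf_le_inf_right B leUC).trans_eq hCB)).trans_eq hUD)
    (le_inf leEU leEB)
  -- distinctness
  have neSE : S ≠ E := by
    intro h
    have hAD : A = D := by rw [← hSD, h, sup_eq_right.mpr leED]
    have leTD : T ≤ D := leTA.trans_eq hAD
    have hTE : T = E := by rw [← mTD, inf_eq_left.mpr leTD]
    have hAE : A = E := by rw [← hST, h, hTE]; simp
    exact h1 (hAD.symm.trans hAE)
  have neTE : T ≠ E := by
    intro h
    have hAD : A = D := by rw [← hTD, h, sup_eq_right.mpr leED]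
    have leSD : S ≤ D := leSA.trans_eq hAD
    have hSE : S = E := by rw [← mSD, inf_eq_left.mpr leSD]
    have hAE : A = E := by rw [← hST, h, hSE]; simp
    exact h1 (hAD.symm.trans hAE)
  have neUE : U ≠ E := by
    intro h
    have hFS : F = S := by rw [← hSU, h, sup_eq_left.mpr leES]
    have leDS : D ≤ S := leDF.trans_eq hFS
    exact h1 (by rw [← mSD, inf_eq_right.mpr leDS])
  have neST : S ≠ T := by
    intro h
    have hAS : A = S := by rw [← hST, h]; simp
    have leDS : D ≤ S := leDA.trans_eq hAS
    exact h1 (by rw [← mSD, inf_eq_right.mpr leDS])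
  have neSD : S ≠ D := fun h => h1 (by rw [← mSD, h]; simp)
  have neTD : T ≠ D := fun h => h1 (by rw [← mTD, h]; simp)
  have neUD : U ≠ D := fun h => h1 (by rw [← mDU, h]; simp)
  have neSU : S ≠ U := by
    intro h
    have hFS : F = S := by rw [← hSU, h]; simp
    have leTS : T ≤ S := leTF.trans_eq hFS
    exact neTE (by rw [← mST, inf_eq_right.mpr leTS])
  have neTU : T ≠ U := by
    intro h
    have hFT : F = T := by rw [← hTU, h]; simp
    have leST : S ≤ T := leSF.trans_eq hFT
    exact neSE (by rw [← mST, inf_eq_left.mpr leST])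
  have neAE : A ≠ E := fun h => h1 (le_antisymm (leDA.trans_eq h) leED)
  have neAS : A ≠ S := fun h =>
    neTE (by rw [← mST, inf_eq_right.mpr (leTA.trans_eq h : T ≤ S)])
  have neAT : A ≠ T := fun h =>
    neSE (by rw [← mST, inf_eq_left.mpr (leSA.trans_eq h : S ≤ T)])
  have neAD : A ≠ D := fun h =>
    neSE (by rw [← mSD, inf_eq_left.mpr (leSA.trans_eq h : S ≤ D)])
  have neAU : A ≠ U := fun h =>
    neSE (by rw [← mSU, inf_eq_left.mpr (leSA.trans_eq h : S ≤ U)])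
  have neCE : C ≠ E := fun h => h1 (le_antisymm (leDC.trans_eq h) leED)
  have neCS : C ≠ S := fun h =>
    h1 (by rw [← mSD, inf_eq_right.mpr (leDC.trans_eq h : D ≤ S)])
  have neCT : C ≠ T := fun h =>
    h1 (by rw [← mTD, inf_eq_right.mpr (leDC.trans_eq h : D ≤ T)])
  have neCD : C ≠ D := fun h =>
    neUE (by rw [← mDU, inf_eq_right.mpr (leUC.trans_eq h : U ≤ D)])
  have neCU : C ≠ U := fun h =>
    h1 (by rw [← mDU, inf_eq_left.mpr (leDC.trans_eq h : D ≤ U)])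
  have neAC : A ≠ C := fun h => neAD (by rw [← mAC, ← h]; simp)
  have neBE : B ≠ E := fun h => h1 (le_antisymm (leDB.trans_eq h) leED)
  have neBS : B ≠ S := fun h =>
    h1 (by rw [← mSD, inf_eq_right.mpr (leDB.trans_eq h : D ≤ S)])
  have neBT : B ≠ T := fun h =>
    h1 (by rw [← mTD, inf_eq_right.mpr (leDB.trans_eq h : D ≤ T)])
  have neBU : B ≠ U := fun h =>
    h1 (by rw [← mDU, inf_eq_left.mpr (leDB.trans_eq h : D ≤ U)])
  have neBD : B ≠ D := by
    intro h
    have hFA : F = A := by rw [← hAB, h, sup_eq_left.mpr leDA]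
    have leCA : C ≤ A := leCF.trans_eq hFA
    exact neCD (by rw [← mAC, inf_eq_right.mpr leCA])
  have neBA : B ≠ A := fun h => neAD (by rw [← mAB, h]; simp)
  have neBC : B ≠ C := fun h => neBD (by rw [← mBC, ← h]; simp)
  have neFE : F ≠ E := fun h => h1 (le_antisymm (leDF.trans_eq h) leED)
  have neFS : F ≠ S := fun h =>
    neUE (by rw [← mSU, inf_eq_right.mpr (leUF.trans_eq h : U ≤ S)])
  have neFT : F ≠ T := fun h =>
    neUE (by rw [← mTU, inf_eq_right.mpr (leUF.trans_eq h : U ≤ T)])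
  have neFD : F ≠ D := fun h =>
    neSE (by rw [← mSD, inf_eq_left.mpr (leSF.trans_eq h : S ≤ D)])
  have neFU : F ≠ U := fun h =>
    neSE (by rw [← mSU, inf_eq_left.mpr (leSF.trans_eq h : S ≤ U)])
  have neFA : F ≠ A := fun h =>
    neUE (by rw [← mUA, inf_eq_left.mpr (leUF.trans_eq h : U ≤ A)])
  have neFB : F ≠ B := fun h =>
    neSE (by rw [← mSB, inf_eq_left.mpr (leSF.trans_eq h : S ≤ B)])
  have neFC : F ≠ C := fun h =>
    neSE (by rw [← mSC, inf_eq_left.mpr (leSF.trans_eq h : S ≤ C)])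
  refine ⟨⟨embed9 A B C D E F S T U, ?_, ?_, ?_,
    rfl, rfl, rfl, rfl, rfl, rfl, rfl, rfl, rfl⟩, by decide⟩
  · intro a b
    cases a <;> cases b <;> intro hab
    exacts [rfl,
      absurd hab.symm neSE,
      absurd hab.symm neTE,
      absurd hab.symm h1,
      absurd hab.symm neUE,
      absurd hab.symm neAE,
      absurd hab.symm neBE,
      absurd hab.symm neCE,
      absurd hab.symm neFE,
      absurd hab neSE,
      rfl,
      absurd hab neST,
      absurd hab neSD,
      absurd hab neSU,
      absurd hab.symm neAS,
      absurd hab.symm neBS,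
      absurd hab.symm neCS,
      absurd hab.symm neFS,
      absurd hab neTE,
      absurd hab.symm neST,
      rfl,
      absurd hab neTD,
      absurd hab neTU,
      absurd hab.symm neAT,
      absurd hab.symm neBT,
      absurd hab.symm neCT,
      absurd hab.symm neFT,
      absurd hab h1,
      absurd hab.symm neSD,
      absurd hab.symm neTD,
      rfl,
      absurd hab.symm neUD,
      absurd hab.symm neAD,
      absurd hab.symm neBD,
      absurd hab.symm neCD,
      absurd hab.symm neFD,
      absurd hab neUE,
      absurd hab.symm neSU,
      absurd hab.symm neTU,
      absurd hab neUD,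
      rfl,
      absurd hab.symm neAU,
      absurd hab.symm neBU,
      absurd hab.symm neCU,
      absurd hab.symm neFU,
      absurd hab neAE,
      absurd hab neAS,
      absurd hab neAT,
      absurd hab neAD,
      absurd hab neAU,
      rfl,
      absurd hab.symm neBA,
      absurd hab neAC,
      absurd hab.symm neFA,
      absurd hab neBE,
      absurd hab neBS,
      absurd hab neBT,
      absurd hab neBD,
      absurd hab neBU,
      absurd hab neBA,
      rfl,
      absurd hab neBC,
      absurd hab.symm neFB,
      absurd hab neCE,
      absurd hab neCS,
      absurd hab neCT,
      absurd hab neCD,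
      absurd hab neCU,
      absurd hab.symm neAC,
      absurd hab.symm neBC,
      rfl,
      absurd hab.symm neFC,
      absurd hab neFE,
      absurd hab neFS,
      absurd hab neFT,
      absurd hab neFD,
      absurd hab neFU,
      absurd hab neFA,
      absurd hab neFB,
      absurd hab neFC,
      rfl]
  · intro a b
    cases a <;> cases b
    exacts [le_antisymm le_sup_left (sup_le le_rfl le_rfl),
      (sup_eq_right.mpr leES).symm,
      (sup_eq_right.mpr leET).symm,
      (sup_eq_right.mpr leED).symm,
      (sup_eq_right.mpr leEU).symm,
      (sup_eq_right.mpr leEA).symm,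
      (sup_eq_right.mpr leEB).symm,
      (sup_eq_right.mpr leEC).symm,
      (sup_eq_right.mpr leEF).symm,
      (sup_eq_left.mpr leES).symm,
      le_antisymm le_sup_left (sup_le le_rfl le_rfl),
      (hST).symm,
      (hSD).symm,
      (hSU).symm,
      (sup_eq_right.mpr leSA).symm,
      (sSB).symm,
      (sSC).symm,
      (sup_eq_right.mpr leSF).symm,
      (sup_eq_left.mpr leET).symm,
      ((sup_comm T S).trans hST).symm,
      le_antisymm le_sup_left (sup_le le_rfl le_rfl),
      (hTD).symm,
      (hTU).symm,
      (sup_eq_right.mpr leTA).symm,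
      (sTB).symm,
      (sTC).symm,
      (sup_eq_right.mpr leTF).symm,
      (sup_eq_left.mpr leED).symm,
      ((sup_comm D S).trans hSD).symm,
      ((sup_comm D T).trans hTD).symm,
      le_antisymm le_sup_left (sup_le le_rfl le_rfl),
      (hDU).symm,
      (sup_eq_right.mpr leDA).symm,
      (sup_eq_right.mpr leDB).symm,
      (sup_eq_right.mpr leDC).symm,
      (sup_eq_right.mpr leDF).symm,
      (sup_eq_left.mpr leEU).symm,
      ((sup_comm U S).trans hSU).symm,
      ((sup_comm U T).trans hTU).symm,
      ((sup_comm U D).trans hDU).symm,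
      le_antisymm le_sup_left (sup_le le_rfl le_rfl),
      (sUA).symm,
      (sUB).symm,
      (sup_eq_right.mpr leUC).symm,
      (sup_eq_right.mpr leUF).symm,
      (sup_eq_left.mpr leEA).symm,
      (sup_eq_left.mpr leSA).symm,
      (sup_eq_left.mpr leTA).symm,
      (sup_eq_left.mpr leDA).symm,
      ((sup_comm A U).trans sUA).symm,
      le_antisymm le_sup_left (sup_le le_rfl le_rfl),
      (hAB).symm,
      (sAC).symm,
      (sup_eq_right.mpr leAF).symm,
      (sup_eq_left.mpr leEB).symm,
      ((sup_comm B S).trans sSB).symm,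
      ((sup_comm B T).trans sTB).symm,
      (sup_eq_left.mpr leDB).symm,
      ((sup_comm B U).trans sUB).symm,
      ((sup_comm B A).trans hAB).symm,
      le_antisymm le_sup_left (sup_le le_rfl le_rfl),
      (hBC).symm,
      (sup_eq_right.mpr leBF).symm,
      (sup_eq_left.mpr leEC).symm,
      ((sup_comm C S).trans sSC).symm,
      ((sup_comm C T).trans sTC).symm,
      (sup_eq_left.mpr leDC).symm,
      (sup_eq_left.mpr leUC).symm,
      ((sup_comm C A).trans sAC).symm,
      ((sup_comm C B).trans hBC).symm,
      le_antisymm le_sup_left (sup_le le_rfl le_rfl),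
      (sup_eq_right.mpr leCF).symm,
      (sup_eq_left.mpr leEF).symm,
      (sup_eq_left.mpr leSF).symm,
      (sup_eq_left.mpr leTF).symm,
      (sup_eq_left.mpr leDF).symm,
      (sup_eq_left.mpr leUF).symm,
      (sup_eq_left.mpr leAF).symm,
      (sup_eq_left.mpr leBF).symm,
      (sup_eq_left.mpr leCF).symm,
      le_antisymm le_sup_left (sup_le le_rfl le_rfl)]
  · intro a b
    cases a <;> cases b
    exacts [le_antisymm (le_inf le_rfl le_rfl) inf_le_left,
      (inf_eq_left.mpr leES).symm,
      (inf_eq_left.mpr leET).symm,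
      (inf_eq_left.mpr leED).symm,
      (inf_eq_left.mpr leEU).symm,
      (inf_eq_left.mpr leEA).symm,
      (inf_eq_left.mpr leEB).symm,
      (inf_eq_left.mpr leEC).symm,
      (inf_eq_left.mpr leEF).symm,
      (inf_eq_right.mpr leES).symm,
      le_antisymm (le_inf le_rfl le_rfl) inf_le_left,
      (mST).symm,
      (mSD).symm,
      (mSU).symm,
      (inf_eq_left.mpr leSA).symm,
      (mSB).symm,
      (mSC).symm,
      (inf_eq_left.mpr leSF).symm,
      (inf_eq_right.mpr leET).symm,
      ((inf_comm T S).trans mST).symm,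
      le_antisymm (le_inf le_rfl le_rfl) inf_le_left,
      (mTD).symm,
      (mTU).symm,
      (inf_eq_left.mpr leTA).symm,
      (mTB).symm,
      (mTC).symm,
      (inf_eq_left.mpr leTF).symm,
      (inf_eq_right.mpr leED).symm,
      ((inf_comm D S).trans mSD).symm,
      ((inf_comm D T).trans mTD).symm,
      le_antisymm (le_inf le_rfl le_rfl) inf_le_left,
      (mDU).symm,
      (inf_eq_left.mpr leDA).symm,
      (inf_eq_left.mpr leDB).symm,
      (inf_eq_left.mpr leDC).symm,
      (inf_eq_left.mpr leDF).symm,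
      (inf_eq_right.mpr leEU).symm,
      ((inf_comm U S).trans mSU).symm,
      ((inf_comm U T).trans mTU).symm,
      ((inf_comm U D).trans mDU).symm,
      le_antisymm (le_inf le_rfl le_rfl) inf_le_left,
      (mUA).symm,
      (mUB).symm,
      (inf_eq_left.mpr leUC).symm,
      (inf_eq_left.mpr leUF).symm,
      (inf_eq_right.mpr leEA).symm,
      (inf_eq_right.mpr leSA).symm,
      (inf_eq_right.mpr leTA).symm,
      (inf_eq_right.mpr leDA).symm,
      ((inf_comm A U).trans mUA).symm,
      le_antisymm (le_inf le_rfl le_rfl) inf_le_left,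
      (mAB).symm,
      (mAC).symm,
      (inf_eq_left.mpr leAF).symm,
      (inf_eq_right.mpr leEB).symm,
      ((inf_comm B S).trans mSB).symm,
      ((inf_comm B T).trans mTB).symm,
      (inf_eq_right.mpr leDB).symm,
      ((inf_comm B U).trans mUB).symm,
      ((inf_comm B A).trans mAB).symm,
      le_antisymm (le_inf le_rfl le_rfl) inf_le_left,
      (mBC).symm,
      (inf_eq_left.mpr leBF).symm,
      (inf_eq_right.mpr leEC).symm,
      ((inf_comm C S).trans mSC).symm,
      ((inf_comm C T).trans mTC).symm,
      (inf_eq_right.mpr leDC).symm,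
      (inf_eq_right.mpr leUC).symm,
      ((inf_comm C A).trans mAC).symm,
      ((inf_comm C B).trans mBC).symm,
      le_antisymm (le_inf le_rfl le_rfl) inf_le_left,
      (inf_eq_left.mpr leCF).symm,
      (inf_eq_right.mpr leEF).symm,
      (inf_eq_right.mpr leSF).symm,
      (inf_eq_right.mpr leTF).symm,
      (inf_eq_right.mpr leDF).symm,
      (inf_eq_right.mpr leUF).symm,
      (inf_eq_right.mpr leAF).symm,
      (inf_eq_right.mpr leBF).symm,
      (inf_eq_right.mpr leCF).symm,
      le_antisymm (le_inf le_rfl le_rfl) inf_le_left]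
end
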